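/- arXiv:1006.5652 — 2 statements merged into one kernel-verified Lean document; each statement's English description precedes it below -/
import Mathlib

section
/- Let q > 0, q ≠ 1, and R_q = 2/(1-q) if 0 < q < 1, R_q = 2q/(q-1) if q > 1. Define Sin_q(x) = (𝓔_q(ix) − 𝓔_q(−ix))/(2i) and Cos_q(x) = (𝓔_q(ix) + 𝓔_q(−ix))/2 for |x| < R_q, where 𝓔_q(z) = ∑_{n=0}^∞ z^n/{n}_q!. Then for every nonzero real x with |x| < R_q and |qx| < R_q: (Sin_q(qx) − Sin_q(x))/((q−1)x) = (Cos_q(x) + Cos_q(qx))/2 and (Cos_q(qx) − Cos_q(x))/((q−1)x) = −(Sin_q(x) + Sin_q(qx))/2; i.e. D_q Sin_q = ⟨Cos_q⟩ and D_q Cos_q = −⟨Sin_q⟩. -/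
/-- The symbol `{n}_q = 2(1-q^n)/((1-q)(1+q^(n-1)))` (for `n ≥ 1`). -/
noncomputable def qBrace (q : ℝ) (n : ℕ) : ℝ :=
  2 * (1 - q ^ n) / ((1 - q) * (1 + q ^ (n - 1)))

/-- The factorial `{n}_q! = {1}_q {2}_q ⋯ {n}_q`, with `{0}_q! = 1`. -/
noncomputable def qBraceFact (q : ℝ) (n : ℕ) : ℝ := ∏ k ∈ Finset.range n, qBrace q (k + 1)

/-- The radius `R_q = 2/(1-q)` for `0 < q < 1` and `R_q = 2q/(q-1)` for `q > 1`. -/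
noncomputable def Rq (q : ℝ) : ℝ := if q < 1 then 2 / (1 - q) else 2 * q / (q - 1)

/-- The improved q-exponential function `𝓔_q(z) = ∑_{n=0}^∞ z^n/{n}_q!`. -/
noncomputable def impExp (q : ℝ) (z : ℂ) : ℂ := ∑' n : ℕ, z ^ n / (qBraceFact q n : ℂ)

/-- The improved q-sine `Sin_q(x) = (𝓔_q(ix) − 𝓔_q(−ix))/(2i)`. -/
noncomputable def impSin (q : ℝ) (x : ℝ) : ℂ :=
  (impExp q (Complex.I * x) - impExp q (-(Complex.I * x))) / (2 * Complex.I)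

/-- The improved q-cosine `Cos_q(x) = (𝓔_q(ix) + 𝓔_q(−ix))/2`. -/
noncomputable def impCos (q : ℝ) (x : ℝ) : ℂ :=
  (impExp q (Complex.I * x) + impExp q (-(Complex.I * x))) / 2

/-! The bracket `{n+1}_q` is exactly the number with `(q^(n+1) - 1) / {n+1}_q = (q - 1)(1 + q^n)/2`,
so the `(n+1)`-st term of `𝓔_q(qz) - 𝓔_q(z)` equals `(q-1)z/2` times the `n`-th term of
`𝓔_q(z) + 𝓔_q(qz)`: termwise, `D_q 𝓔_q = ⟨𝓔_q⟩`. Both series converge for `|z| < R_q` by the ratio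
test, because `{n}_q → R_q`. Splitting `𝓔_q(±ix)` into its odd and even parts gives the identities for
`Sin_q` and `Cos_q`. -/

open Filter Topology Finset

lemma qBrace_succ_eq_geom_sum {q : ℝ} (hq1 : q ≠ 1) (n : ℕ) :
    qBrace q (n + 1) = 2 * (∑ i ∈ range (n + 1), q ^ i) / (1 + q ^ n) := by
  rw [qBrace, geom_sum_eq hq1, Nat.add_sub_cancel, ← neg_div_neg_eq (q ^ (n + 1) - 1)]
  field_simp
  ring

lemma qBrace_succ_pos {q : ℝ} (hq : 0 ≤ q) (hq1 : q ≠ 1) (n : ℕ) : 0 < qBrace q (n + 1) := by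
  rw [qBrace_succ_eq_geom_sum hq1, sum_range_succ']
  positivity

lemma qBraceFact_succ (q : ℝ) (n : ℕ) :
    qBraceFact q (n + 1) = qBraceFact q n * qBrace q (n + 1) :=
  prod_range_succ _ n

lemma qBraceFact_pos {q : ℝ} (hq : 0 ≤ q) (hq1 : q ≠ 1) (n : ℕ) : 0 < qBraceFact q n :=
  prod_pos fun k _ => qBrace_succ_pos hq hq1 k

-- For `q > 1` this reduces the limit of `{n}_q` to the case `q⁻¹ < 1`.
lemma qBrace_inv (q : ℝ) (n : ℕ) : qBrace q⁻¹ (n + 1) = qBrace q (n + 1) := by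
  rcases eq_or_ne q 0 with rfl | hq
  · simp
  have hc : -q⁻¹ ^ (n + 1) ≠ 0 := neg_ne_zero.mpr (pow_ne_zero _ (inv_ne_zero hq))
  simp only [qBrace, Nat.add_sub_cancel]
  conv_rhs => rw [← mul_div_mul_left _ _ hc]
  simp only [inv_pow, pow_succ]
  congr 1 <;> field_simp <;> ring

lemma tendsto_qBrace_of_abs_lt_one {q : ℝ} (hq : |q| < 1) :
    Tendsto (fun n => qBrace q (n + 1)) atTop (𝓝 (2 / (1 - q))) := by
  have hpow := tendsto_pow_atTop_nhds_zero_of_abs_lt_one hq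
  have h1q : 1 - q ≠ 0 := by linarith [le_abs_self q]
  have hlim : Tendsto (fun n : ℕ => 2 * (1 - q * q ^ n) / ((1 - q) * (1 + q ^ n))) atTop
      (𝓝 (2 * (1 - q * 0) / ((1 - q) * (1 + 0)))) :=
    ((tendsto_const_nhds.sub (hpow.const_mul q)).const_mul 2).div
      ((tendsto_const_nhds.add hpow).const_mul (1 - q)) (by simpa using h1q)
  simp only [mul_zero, sub_zero, add_zero, mul_one] at hlim
  simpa only [qBrace, Nat.add_sub_cancel, pow_succ'] using hlim

lemma Rq_inv_of_one_lt {q : ℝ} (hq : 1 < q) : Rq q⁻¹ = Rq q := by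
  rw [Rq, Rq, if_pos (inv_lt_one_of_one_lt₀ hq), if_neg hq.not_gt]
  field_simp

lemma tendsto_qBrace_Rq {q : ℝ} (hq : 0 < q) (hq1 : q ≠ 1) :
    Tendsto (fun n => qBrace q (n + 1)) atTop (𝓝 (Rq q)) := by
  rcases hq1.lt_or_gt with h | h
  · rw [Rq, if_pos h]
    exact tendsto_qBrace_of_abs_lt_one (abs_lt.mpr ⟨by linarith, h⟩)
  · have hinv : |q⁻¹| < 1 := by
      rw [abs_of_pos (inv_pos.mpr hq)]; exact inv_lt_one_of_one_lt₀ h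
    have := tendsto_qBrace_of_abs_lt_one hinv
    rw [← Rq_inv_of_one_lt h, Rq, if_pos (inv_lt_one_of_one_lt₀ h)]
    simpa only [qBrace_inv] using this

noncomputable def impExpTerm (q : ℝ) (z : ℂ) (n : ℕ) : ℂ := z ^ n / (qBraceFact q n : ℂ)

lemma impExpTerm_zero (q : ℝ) (z : ℂ) : impExpTerm q z 0 = 1 := by
  simp [impExpTerm, qBraceFact]

lemma norm_impExpTerm_succ {q : ℝ} (hq : 0 ≤ q) (hq1 : q ≠ 1) (z : ℂ) (n : ℕ) :
    ‖impExpTerm q z (n + 1)‖ =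
      ‖z‖ / qBrace q (n + 1) * ‖impExpTerm q z n‖ := by
  have hb := qBrace_succ_pos hq hq1 n
  have hF := qBraceFact_pos hq hq1 n
  simp only [impExpTerm, qBraceFact_succ, norm_div, norm_pow, Complex.ofReal_mul, norm_mul,
    Complex.norm_real, Real.norm_of_nonneg hb.le, Real.norm_of_nonneg hF.le]
  field_simp
  ring

lemma summable_impExpTerm {q : ℝ} (hq : 0 < q) (hq1 : q ≠ 1) {z : ℂ} (hz : ‖z‖ < Rq q) :
    Summable (impExpTerm q z) := by
  obtain ⟨r, hzr, hrR⟩ := exists_between hz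
  have hr : 0 < r := (norm_nonneg z).trans_lt hzr
  refine summable_of_ratio_norm_eventually_le ((div_lt_one hr).mpr hzr) ?_
  filter_upwards [(tendsto_qBrace_Rq hq hq1).eventually (eventually_gt_nhds hrR)] with n hn
  rw [norm_impExpTerm_succ hq.le hq1]
  gcongr

lemma qBrace_succ_mul {q : ℝ} (hq : 0 ≤ q) (hq1 : q ≠ 1) (n : ℕ) :
    qBrace q (n + 1) * ((1 - q) * (1 + q ^ n)) = 2 * (1 - q ^ (n + 1)) := by
  have h1q : 1 - q ≠ 0 := sub_ne_zero.mpr hq1.symm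
  have hqn : 1 + q ^ n ≠ 0 := by positivity
  rw [qBrace, Nat.add_sub_cancel, div_mul_cancel₀ _ (mul_ne_zero h1q hqn)]

lemma impExpTerm_mul_succ_sub {q : ℝ} (hq : 0 ≤ q) (hq1 : q ≠ 1) (z : ℂ) (n : ℕ) :
    impExpTerm q (q * z) (n + 1) - impExpTerm q z (n + 1) =
      (q - 1) * z / 2 * (impExpTerm q z n + impExpTerm q (q * z) n) := by
  have hb : (qBrace q (n + 1) : ℂ) ≠ 0 := by exact_mod_cast (qBrace_succ_pos hq hq1 n).ne'
  have hF : (qBraceFact q n : ℂ) ≠ 0 := by exact_mod_cast (qBraceFact_pos hq hq1 n).ne'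
  have hrel : (qBrace q (n + 1) : ℂ) * ((1 - q) * (1 + q ^ n)) = 2 * (1 - q ^ (n + 1)) := by
    exact_mod_cast qBrace_succ_mul hq hq1 n
  simp only [impExpTerm, qBraceFact_succ, Complex.ofReal_mul]
  field_simp
  linear_combination z ^ (n + 1) * hrel

theorem impExp_mul_sub {q : ℝ} (hq : 0 < q) (hq1 : q ≠ 1) {z : ℂ} (hz : ‖z‖ < Rq q)
    (hqz : ‖(q : ℂ) * z‖ < Rq q) :
    impExp q (q * z) - impExp q z = (q - 1) * z / 2 * (impExp q z + impExp q (q * z)) := by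
  have hE : HasSum (impExpTerm q z) (impExp q z) := (summable_impExpTerm hq hq1 hz).hasSum
  have hqE : HasSum (impExpTerm q (q * z)) (impExp q (q * z)) :=
    (summable_impExpTerm hq hq1 hqz).hasSum
  have hshift : HasSum (fun n => impExpTerm q (q * z) (n + 1) - impExpTerm q z (n + 1))
      ((q - 1) * z / 2 * (impExp q z + impExp q (q * z))) := by
    simpa only [impExpTerm_mul_succ_sub hq.le hq1] using (hE.add hqE).mul_left _
  refine (hqE.sub hE).unique ?_
  have h := (hasSum_nat_add_iff (f := fun n => impExpTerm q (q * z) n - impExpTerm q z n) 1).mp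
    hshift
  rwa [sum_range_one, impExpTerm_zero, impExpTerm_zero, sub_self, add_zero] at h

/-- `D_q Sin_q = ⟨Cos_q⟩` and `D_q Cos_q = −⟨Sin_q⟩` for nonzero real `x` with
`|x| < R_q` and `|qx| < R_q`. -/
theorem jackson_deriv_impSin_impCos (q : ℝ) (hq : 0 < q) (hq1 : q ≠ 1) (x : ℝ)
    (hx0 : x ≠ 0) (hx : |x| < Rq q) (hqx : |q * x| < Rq q) :
    (impSin q (q * x) - impSin q x) / ((↑q - 1) * (x : ℂ)) =
        (impCos q x + impCos q (q * x)) / 2 ∧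
    (impCos q (q * x) - impCos q x) / ((↑q - 1) * (x : ℂ)) =
        -((impSin q x + impSin q (q * x)) / 2) := by
  have hpos := impExp_mul_sub hq hq1 (z := Complex.I * x) (by simpa using hx)
    (by simpa [abs_mul] using hqx)
  have hneg := impExp_mul_sub hq hq1 (z := -(Complex.I * x)) (by simpa using hx)
    (by simpa [abs_mul] using hqx)
  have hqI : Complex.I * ((q * x : ℝ) : ℂ) = q * (Complex.I * x) := by push_cast; ring
  have hqI' : -(Complex.I * ((q * x : ℝ) : ℂ)) = q * -(Complex.I * x) := by rw [hqI, mul_neg]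
  have hden : ((q : ℂ) - 1) * x ≠ 0 :=
    mul_ne_zero (sub_ne_zero.mpr (by exact_mod_cast hq1)) (by exact_mod_cast hx0)
  simp only [impSin, impCos]
  rw [hqI', hqI]
  simp only [div_mul_eq_div_div_swap _ (2 : ℂ), Complex.div_I]
  set a := impExp q (Complex.I * x)
  set b := impExp q (-(Complex.I * x))
  set a' := impExp q (q * (Complex.I * x))
  set b' := impExp q (q * -(Complex.I * x))
  constructor
  · rw [div_eq_iff hden]
    linear_combination (-Complex.I / 2) * hpos + (Complex.I / 2) * hneg -
      (q - 1) * x / 4 * (a + b + a' + b') * Complex.I_sq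
  · rw [div_eq_iff hden]
    linear_combination hpos / 2 + hneg / 2
end

section
/- Let q > 0, q ≠ 1, and R_q = 2/(1-q) if 0 < q < 1, R_q = 2q/(q-1) if q > 1. Then for every real x with |x| < R_q/2 such that cos_q(x) ≠ 0, setting tan_q(x) = sin_q(x)/cos_q(x), one has Cos_q(2x) = (1 − tan_q(x)²)/(1 + tan_q(x)²) and Sin_q(2x) = 2 tan_q(x)/(1 + tan_q(x)²), where Sin_q, Cos_q are the improved q-trigonometric functions built from 𝓔_q(z) = ∑_{n=0}^∞ z^n/{n}_q! and sin_q, cos_q are built from e_q(z) = ∑_{n=0}^∞ z^n/[n]_q!. -/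
/-- The q-integer `[k]_q = 1 + q + q^2 + ⋯ + q^(k-1)`. -/
noncomputable def qInt (q : ℝ) (k : ℕ) : ℝ := ∑ i ∈ Finset.range k, q ^ i

/-- The q-factorial `[n]_q! = [1]_q [2]_q ⋯ [n]_q`, with `[0]_q! = 1`. -/
noncomputable def qFact (q : ℝ) (n : ℕ) : ℝ := ∏ k ∈ Finset.range n, qInt q (k + 1)

/-- The first q-exponential `e_q(z) = ∑_{n=0}^∞ z^n/[n]_q!`. -/
noncomputable def qExp (q : ℝ) (z : ℂ) : ℂ := ∑' n : ℕ, z ^ n / (qFact q n : ℂ)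

/-- The standard q-sine `sin_q(x) = (e_q(ix) − e_q(−ix))/(2i)`. -/
noncomputable def qSin (q : ℝ) (x : ℝ) : ℂ :=
  (qExp q (Complex.I * x) - qExp q (-(Complex.I * x))) / (2 * Complex.I)

/-- The standard q-cosine `cos_q(x) = (e_q(ix) + e_q(−ix))/2`. -/
noncomputable def qCos (q : ℝ) (x : ℝ) : ℂ :=
  (qExp q (Complex.I * x) + qExp q (-(Complex.I * x))) / 2

/-- The standard q-tangent `tan_q(x) = sin_q(x)/cos_q(x)`. -/
noncomputable def qTan (q : ℝ) (x : ℝ) : ℂ := qSin q x / qCos q x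

/-!
Write `E_q(z) = e_{1/q}(z) = ∑ q^{n(n-1)/2} z^n/[n]_q!`. By the q-binomial theorem the
Cauchy product `E_q(tz) e_q(z)` has `n`-th coefficient `∏_{j<n} (1 + q^j t)/[n]_q!`. At `t = -1`
this gives `E_q(-z) e_q(z) = 1`; at `t = 1`, since `{n}_q! = 2^n [n]_q!/∏_{j<n} (1 + q^j)`, it
gives `E_q(z) e_q(z) = 𝓔_q(2z)`. Hence `𝓔_q(2z) = e_q(z)/e_q(-z)` for `|z| < R_q/2`, the common
disc of convergence (`R_q` is invariant under `q ↦ 1/q`). With `a = e_q(ix)` and `b = e_q(-ix)`,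
`Cos_q(2x) = (a/b + b/a)/2`, `Sin_q(2x) = (a/b - b/a)/(2i)` and `tan_q(x) = (a - b)/(i(a + b))`,
so both formulas are rational identities in `a` and `b`.
-/

open Finset Filter Topology

variable {q : ℝ}

lemma qInt_succ_pos (hq : 0 < q) (k : ℕ) : 0 < qInt q (k + 1) :=
  sum_pos (fun i _ => pow_pos hq i) nonempty_range_add_one

lemma qFact_zero : qFact q 0 = 1 := prod_range_zero _

lemma qFact_succ (n : ℕ) : qFact q (n + 1) = qFact q n * qInt q (n + 1) :=
  prod_range_succ _ _

lemma qFact_pos (hq : 0 < q) (n : ℕ) : 0 < qFact q n :=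
  prod_pos fun k _ => qInt_succ_pos hq k

lemma qInt_add (m n : ℕ) : qInt q (m + n) = qInt q m + q ^ m * qInt q n := by
  simp only [qInt, sum_range_add, mul_sum, pow_add]

lemma qInt_eq_geom (hq1 : q ≠ 1) (n : ℕ) : qInt q n = (1 - q ^ n) / (1 - q) := by
  rw [qInt, geom_sum_eq hq1, ← neg_sub 1 q, ← neg_sub 1 (q ^ n), neg_div_neg_eq]

lemma qInt_inv_succ_mul_pow (hq : q ≠ 0) (n : ℕ) :
    qInt q⁻¹ (n + 1) * q ^ n = qInt q (n + 1) := by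
  rw [qInt, qInt, sum_mul, ← sum_range_reflect (q ^ ·)]
  refine sum_congr rfl fun i hi => ?_
  rw [Nat.add_sub_cancel, pow_sub₀ q hq (Nat.le_of_lt_succ (mem_range.1 hi)), inv_pow, mul_comm]

lemma qFact_inv_mul_pow_choose (hq : q ≠ 0) (n : ℕ) :
    qFact q⁻¹ n * q ^ n.choose 2 = qFact q n := by
  induction n with
  | zero => simp [qFact_zero]
  | succ n ih =>
    rw [qFact_succ, qFact_succ, ← ih, ← qInt_inv_succ_mul_pow hq, Nat.choose_succ_succ',
      Nat.choose_one_right, pow_add]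
    ring

lemma Rq_inv (hq : 0 < q) : Rq q⁻¹ = Rq q := by
  rcases lt_trichotomy q 1 with h | rfl | h
  · have : ¬ q⁻¹ < 1 := not_lt.2 ((one_le_inv₀ hq).2 h.le)
    rw [Rq, Rq, if_neg this, if_pos h]
    field_simp
  · simp
  · have : q⁻¹ < 1 := inv_lt_one_of_one_lt₀ h
    rw [Rq, Rq, if_pos this, if_neg (not_lt.2 h.le)]
    field_simp

lemma eventually_lt_qInt (hq : 0 < q) (hq1 : q ≠ 1) {s : ℝ} (hs : s < Rq q / 2) :
    ∀ᶠ n in atTop, s < qInt q n := by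
  rcases hq1.lt_or_gt with h | h
  · have hlim : Tendsto (qInt q) atTop (𝓝 (1 - q)⁻¹) :=
      (hasSum_geometric_of_lt_one hq.le h).tendsto_sum_nat
    refine hlim.eventually_const_lt ?_
    rw [Rq, if_pos h] at hs
    linarith [show 2 / (1 - q) / 2 = (1 - q)⁻¹ by ring]
  · have hlim : Tendsto (qInt q) atTop atTop := by
      refine tendsto_atTop_mono (fun n => ?_) tendsto_natCast_atTop_atTop
      simpa [qInt] using card_nsmul_le_sum (range n) (q ^ ·) 1 fun i _ => one_le_pow₀ h.le
    exact hlim.eventually_gt_atTop s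

lemma summable_norm_pow_div_qFact (hq : 0 < q) (hq1 : q ≠ 1) {z : ℂ} (hz : ‖z‖ < Rq q / 2) :
    Summable fun n => ‖z ^ n / (qFact q n : ℂ)‖ := by
  obtain ⟨ρ, hzρ, hρ⟩ := exists_between hz
  have hρ0 : 0 < ρ := (norm_nonneg z).trans_lt hzρ
  refine summable_of_ratio_norm_eventually_le ((div_lt_one hρ0).2 hzρ) ?_
  filter_upwards [(tendsto_add_atTop_nat 1).eventually (eventually_lt_qInt hq hq1 hρ)] with n hn
  have hF := qFact_pos hq n
  simp only [norm_norm, norm_div, norm_mul, norm_pow, Complex.norm_real, qFact_succ, pow_succ,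
    Real.norm_of_nonneg hF.le, Real.norm_of_nonneg (hρ0.trans hn).le]
  rw [mul_div_mul_comm, mul_comm (‖z‖ / ρ)]
  gcongr

noncomputable def qBinom (q : ℝ) (n k : ℕ) : ℝ := qFact q n / (qFact q k * qFact q (n - k))

lemma qBinom_zero_right (hq : 0 < q) (n : ℕ) : qBinom q n 0 = 1 := by
  rw [qBinom, Nat.sub_zero, qFact_zero, one_mul, div_self (qFact_pos hq n).ne']

lemma qBinom_self (hq : 0 < q) (n : ℕ) : qBinom q n n = 1 := by
  rw [qBinom, Nat.sub_self, qFact_zero, mul_one, div_self (qFact_pos hq n).ne']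

lemma qBinom_succ_succ (hq : 0 < q) {k n : ℕ} (h : k < n) :
    qBinom q (n + 1) (k + 1) = qBinom q n (k + 1) + q ^ (n - k) * qBinom q n k := by
  obtain ⟨m, rfl⟩ : ∃ m, n = k + 1 + m := ⟨n - (k + 1), by omega⟩
  have hsplit : qInt q (k + 1 + m + 1) = qInt q (m + 1) + q ^ (m + 1) * qInt q (k + 1) := by
    rw [← qInt_add]; ring_nf
  simp only [qBinom, show k + 1 + m + 1 - (k + 1) = m + 1 by omega,
    show k + 1 + m - (k + 1) = m by omega, show k + 1 + m - k = m + 1 by omega,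
    qFact_succ (k + 1 + m), qFact_succ m, qFact_succ k, hsplit]
  have := qFact_pos hq (k + 1 + m)
  have := qFact_pos hq m
  have := qFact_pos hq k
  have := qInt_succ_pos hq m
  have := qInt_succ_pos hq k
  field_simp

lemma prod_one_add_pow_mul_eq_sum_qBinom (hq : 0 < q) (t : ℝ) (n : ℕ) :
    ∏ j ∈ range n, (1 + q ^ j * t) =
      ∑ k ∈ range (n + 1), q ^ k.choose 2 * qBinom q n k * t ^ k := by
  induction n with
  | zero => simp [qBinom_self hq]
  | succ n ih =>
    have hmid : ∀ k ∈ range n, q ^ (k + 1).choose 2 * qBinom q (n + 1) (k + 1) * t ^ (k + 1) =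
        q ^ (k + 1).choose 2 * qBinom q n (k + 1) * t ^ (k + 1) +
          q ^ n * t * (q ^ k.choose 2 * qBinom q n k * t ^ k) := by
      intro k hk
      have hk := mem_range.1 hk
      rw [qBinom_succ_succ hq hk, Nat.choose_succ_succ', Nat.choose_one_right, pow_add,
        ← pow_sub_mul_pow q hk.le]
      ring
    have hlast : q ^ (n + 1).choose 2 * qBinom q (n + 1) (n + 1) * t ^ (n + 1) =
        q ^ n * t * (q ^ n.choose 2 * qBinom q n n * t ^ n) := by
      rw [qBinom_self hq, qBinom_self hq, Nat.choose_succ_succ', Nat.choose_one_right]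
      ring
    rw [prod_range_succ, ih, mul_add, mul_one, mul_comm _ (q ^ n * t), mul_sum,
      sum_range_succ' _ (n + 1),
      sum_range_succ (fun k => q ^ (k + 1).choose 2 * qBinom q (n + 1) (k + 1) * t ^ (k + 1)),
      sum_congr rfl hmid, sum_add_distrib, hlast, sum_range_succ' _ n,
      sum_range_succ (fun k => q ^ n * t * (q ^ k.choose 2 * qBinom q n k * t ^ k)),
      qBinom_zero_right hq, qBinom_zero_right hq]
    ring

lemma sum_div_qFact_mul_qFact (hq : 0 < q) (t : ℝ) (n : ℕ) :
    ∑ k ∈ range (n + 1), q ^ k.choose 2 * t ^ k / (qFact q k * qFact q (n - k)) =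
      (∏ j ∈ range n, (1 + q ^ j * t)) / qFact q n := by
  rw [prod_one_add_pow_mul_eq_sum_qBinom hq, sum_div]
  refine sum_congr rfl fun k _ => ?_
  have := qFact_pos hq n
  rw [qBinom]
  field_simp

lemma qBrace_succ (hq : 0 < q) (hq1 : q ≠ 1) (n : ℕ) :
    qBrace q (n + 1) = 2 * qInt q (n + 1) / (1 + q ^ n) := by
  have : 1 - q ≠ 0 := sub_ne_zero.2 hq1.symm
  have : 0 < 1 + q ^ n := by positivity
  rw [qBrace, qInt_eq_geom hq1, Nat.add_sub_cancel]
  field_simp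

lemma qBraceFact_eq (hq : 0 < q) (hq1 : q ≠ 1) (n : ℕ) :
    qBraceFact q n = 2 ^ n * qFact q n / ∏ j ∈ range n, (1 + q ^ j) := by
  induction n with
  | zero => simp [qBraceFact, qFact_zero]
  | succ n ih =>
    rw [qBraceFact, prod_range_succ, ← qBraceFact, ih, qBrace_succ hq hq1, qFact_succ,
      prod_range_succ]
    have : 0 < 1 + q ^ n := by positivity
    have : 0 < ∏ j ∈ range n, (1 + q ^ j) := prod_pos fun j _ => by positivity
    field_simp
    ring

lemma qExp_inv_mul_qExp (hq : 0 < q) (hq1 : q ≠ 1) {z : ℂ} (hz : ‖z‖ < Rq q / 2) {t : ℝ}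
    (ht : |t| ≤ 1) :
    qExp q⁻¹ (t * z) * qExp q z =
      ∑' n, (((∏ j ∈ range n, (1 + q ^ j * t)) / qFact q n : ℝ) : ℂ) * z ^ n := by
  have htz : ‖(t : ℂ) * z‖ < Rq q⁻¹ / 2 := by
    rw [Rq_inv hq, norm_mul, Complex.norm_real, Real.norm_eq_abs]
    exact (mul_le_of_le_one_left (norm_nonneg z) ht).trans_lt hz
  rw [qExp, qExp, tsum_mul_tsum_eq_tsum_sum_range_of_summable_norm
    (summable_norm_pow_div_qFact (inv_pos.2 hq) (inv_ne_one.2 hq1) htz)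
    (summable_norm_pow_div_qFact hq hq1 hz)]
  refine tsum_congr fun n => ?_
  rw [← sum_div_qFact_mul_qFact hq, Complex.ofReal_sum, sum_mul]
  refine sum_congr rfl fun k hk => ?_
  rw [← qFact_inv_mul_pow_choose hq.ne' k, ← pow_mul_pow_sub z (mem_range_succ_iff.1 hk)]
  have : (q : ℂ) ≠ 0 := Complex.ofReal_ne_zero.2 hq.ne'
  push_cast
  field_simp
  ring

lemma impExp_two_mul (hq : 0 < q) (hq1 : q ≠ 1) {z : ℂ} (hz : ‖z‖ < Rq q / 2) :
    impExp q (2 * z) = qExp q⁻¹ z * qExp q z := by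
  have h := qExp_inv_mul_qExp hq hq1 hz (t := 1) (by simp)
  rw [Complex.ofReal_one, one_mul] at h
  rw [h, impExp]
  refine tsum_congr fun n => ?_
  have := qFact_pos hq n
  have : 0 < ∏ j ∈ range n, (1 + q ^ j) := prod_pos fun j _ => by positivity
  simp only [mul_one, qBraceFact_eq hq hq1]
  push_cast
  field_simp
  ring

lemma qExp_inv_neg_mul_qExp (hq : 0 < q) (hq1 : q ≠ 1) {z : ℂ} (hz : ‖z‖ < Rq q / 2) :
    qExp q⁻¹ (-z) * qExp q z = 1 := by
  have h := qExp_inv_mul_qExp hq hq1 hz (t := -1) (by simp)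
  rw [Complex.ofReal_neg, Complex.ofReal_one, neg_one_mul] at h
  rw [h, tsum_eq_single 0 fun n hn => ?_]
  · simp [qFact_zero]
  · rw [prod_eq_zero (mem_range.2 (Nat.pos_of_ne_zero hn)) (by simp)]
    simp

lemma impExp_two_mul_eq_div (hq : 0 < q) (hq1 : q ≠ 1) {z : ℂ} (hz : ‖z‖ < Rq q / 2) :
    impExp q (2 * z) = qExp q z / qExp q (-z) := by
  have h := qExp_inv_neg_mul_qExp hq hq1 (z := -z) (by rwa [norm_neg])
  rw [neg_neg] at h
  rw [impExp_two_mul hq hq1 hz, eq_div_iff (right_ne_zero_of_mul_eq_one h), mul_right_comm, h,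
    one_mul]

lemma qExp_ne_zero (hq : 0 < q) (hq1 : q ≠ 1) {z : ℂ} (hz : ‖z‖ < Rq q / 2) : qExp q z ≠ 0 :=
  right_ne_zero_of_mul_eq_one (qExp_inv_neg_mul_qExp hq hq1 hz)

lemma double_angle_of_exp {a b τ : ℂ} (ha : a ≠ 0) (hb : b ≠ 0) (hab : a + b ≠ 0)
    (hτ : τ = (a - b) / (2 * Complex.I) / ((a + b) / 2)) :
    (a / b + b / a) / 2 = (1 - τ ^ 2) / (1 + τ ^ 2) ∧
      (a / b - b / a) / (2 * Complex.I) = 2 * τ / (1 + τ ^ 2) := by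
  have hsq : τ ^ 2 = -((a - b) ^ 2 / (a + b) ^ 2) := by
    rw [hτ, div_pow, div_pow, mul_pow, Complex.I_sq]
    field_simp
  have hden : 1 + τ ^ 2 = 4 * a * b / (a + b) ^ 2 := by
    rw [hsq]
    field_simp
    ring
  have hne : 1 + τ ^ 2 ≠ 0 := by
    rw [hden]
    simp [ha, hb, hab]
  constructor
  · rw [eq_div_iff hne, hsq]
    field_simp
    ring
  · rw [eq_div_iff hne, hden, hτ]
    field_simp
    ring

/-- For `|x| < R_q/2` with `cos_q(x) ≠ 0`:
`Cos_q(2x) = (1 − tan_q(x)²)/(1 + tan_q(x)²)` and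
`Sin_q(2x) = 2 tan_q(x)/(1 + tan_q(x)²)`. -/
theorem improved_qTrig_tan_formulas (q : ℝ) (hq : 0 < q) (hq1 : q ≠ 1) (x : ℝ)
    (hx : |x| < Rq q / 2) (hcos : qCos q x ≠ 0) :
    impCos q (2 * x) = (1 - qTan q x ^ 2) / (1 + qTan q x ^ 2) ∧
    impSin q (2 * x) = 2 * qTan q x / (1 + qTan q x ^ 2) := by
  set z := Complex.I * x
  have hz : ‖z‖ < Rq q / 2 := by simpa [z] using hx
  have hz' : ‖-z‖ < Rq q / 2 := by rwa [norm_neg]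
  have h2z : Complex.I * ((2 * x : ℝ) : ℂ) = 2 * z := by push_cast; ring
  have hsum : qExp q z + qExp q (-z) ≠ 0 := fun h => hcos (by rw [qCos, h, zero_div])
  unfold impCos impSin qTan qSin qCos
  rw [h2z, ← mul_neg, impExp_two_mul_eq_div hq hq1 hz, impExp_two_mul_eq_div hq hq1 hz',
    neg_neg]
  exact double_angle_of_exp (qExp_ne_zero hq hq1 hz) (qExp_ne_zero hq hq1 hz') hsum rfl
end
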